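/- Let q be an indeterminate and h ≥ 1. In the field of rational functions Q(q)(x_1,…,x_h), ∑_{w∈S_h} ∏_{r<s} (q^{-2} x_{w(r)} − x_{w(s)})/(x_{w(r)} − x_{w(s)}) = ∏_{k=1}^{h} (1 − q^{-2k})/(1 − q^{-2}). -/
import Mathlib


open scoped BigOperators

/-- The field `ℚ(q)(x₁,…,x_h)` of rational functions: the variable `none` plays the
role of `q` and `some i` plays the role of `x_i`. -/
abbrev KK (h : ℕ) := FractionRing (MvPolynomial (Option (Fin h)) ℚ)

noncomputable def qvar (h : ℕ) : KK h :=
  algebraMap (MvPolynomial (Option (Fin h)) ℚ) (KK h) (MvPolynomial.X none)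

noncomputable def xvar (h : ℕ) (i : Fin h) : KK h :=
  algebraMap (MvPolynomial (Option (Fin h)) ℚ) (KK h) (MvPolynomial.X (some i))

section Aux

open Finset Polynomial Equiv


lemma keyA {K : Type} [Field K] (t : K) {n : ℕ} (x : Fin n → K)
    (hinj : Function.Injective x) (h0 : ∀ i, x i ≠ 0) :
    (1 - t) * ∑ j, ∏ i ∈ Finset.univ.erase j, ((t * x j - x i) / (x j - x i))
      = 1 - t ^ n := by
  set P : K[X] := (∏ i, (C t * X - C (x i))) - C (t ^ n) * ∏ i, (X - C (x i)) with hP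
  have hdeg1 : ∀ i : Fin n, (C t * X - C (x i)).natDegree ≤ 1 := by
    intro i
    refine le_trans (natDegree_sub_le _ _) (max_le ?_ ?_)
    · exact (natDegree_C_mul_le _ _).trans (by simp)
    · simp
  have hdeg2 : ∀ i : Fin n, (X - C (x i)).natDegree ≤ 1 := fun i => (natDegree_X_sub_C _).le
  have hPdeg : P.degree < (n : ℕ) := by
    rw [degree_lt_iff_coeff_zero]
    intro m hm
    rcases eq_or_lt_of_le hm with rfl | hm
    · have h1 : (∏ i : Fin n, (C t * X - C (x i))).coeff n = t ^ n := by
        have hc := coeff_prod_of_natDegree_le (s := (univ : Finset (Fin n)))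
          (fun i => C t * X - C (x i)) 1 (fun i _ => hdeg1 i)
        simp only [card_univ, Fintype.card_fin, mul_one] at hc
        rw [hc]; simp
      have h2 : (∏ i : Fin n, (X - C (x i))).coeff n = 1 := by
        have hc := coeff_prod_of_natDegree_le (s := (univ : Finset (Fin n)))
          (fun i => X - C (x i)) 1 (fun i _ => hdeg2 i)
        simp only [card_univ, Fintype.card_fin, mul_one] at hc
        rw [hc]; simp
      rw [hP, coeff_sub, coeff_C_mul, h1, h2]; ring
    · have hb1 : (∏ i : Fin n, (C t * X - C (x i))).natDegree < m := by
        refine lt_of_le_of_lt (le_trans (natDegree_prod_le _ _) ?_) hm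
        exact le_trans (Finset.sum_le_card_nsmul univ
          (fun i => (C t * X - C (x i)).natDegree) 1 (fun i _ => hdeg1 i)) (by simp)
      have hb2 : (∏ i : Fin n, (X - C (x i))).natDegree < m := by
        refine lt_of_le_of_lt (le_trans (natDegree_prod_le _ _) ?_) hm
        exact le_trans (Finset.sum_le_card_nsmul univ
          (fun i => (X - C (x i)).natDegree) 1 (fun i _ => hdeg2 i)) (by simp)
      rw [hP, coeff_sub, coeff_C_mul,
        coeff_eq_zero_of_natDegree_lt hb1, coeff_eq_zero_of_natDegree_lt hb2]
      ring
  have hvs : Set.InjOn x (univ : Finset (Fin n)) := fun a _ b _ hab => hinj hab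
  have hinterp : P = Lagrange.interpolate univ x (fun i => P.eval (x i)) := by
    apply Lagrange.eq_interpolate hvs
    simpa using hPdeg
  have heval := congrArg (Polynomial.eval (0 : K)) hinterp
  have hevalP : ∀ j : Fin n, P.eval (x j) =
      (t * x j - x j) * ∏ i ∈ univ.erase j, (t * x j - x i) := by
    intro j
    have hz : (∏ i : Fin n, (x j - x i)) = 0 :=
      Finset.prod_eq_zero (mem_univ j) (sub_self _)
    simp only [hP, eval_sub, eval_mul, eval_prod, eval_C, eval_X, eval_pow]
    rw [← Finset.mul_prod_erase univ (fun i => t * x j - x i) (mem_univ j)]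
    simp [hz]
  rw [show (Polynomial.eval 0 P) = (1 - t ^ n) * ∏ i, (-x i) by
      simp only [hP, eval_sub, eval_mul, eval_prod, eval_C, eval_X, zero_sub, mul_zero]
      ring] at heval
  rw [Lagrange.interpolate_apply] at heval
  simp only [eval_finset_sum, eval_mul, eval_C, Lagrange.basis, eval_prod,
    Lagrange.basisDivisor, eval_sub, eval_X, zero_sub, hevalP] at heval
  have key : ∀ j : Fin n,
      (t * x j - x j) * (∏ i ∈ univ.erase j, (t * x j - x i)) *
        ∏ i ∈ univ.erase j, ((x j - x i)⁻¹ * (-x i))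
      = ((1 - t) * ∏ i ∈ univ.erase j, ((t * x j - x i) / (x j - x i))) * ∏ i, (-x i) := by
    intro j
    have h1 : ∀ i ∈ univ.erase j,
        (t * x j - x i) * ((x j - x i)⁻¹ * (-x i))
          = ((t * x j - x i) / (x j - x i)) * (-x i) := fun i _ => by
      rw [div_eq_mul_inv]; ring
    calc (t * x j - x j) * (∏ i ∈ univ.erase j, (t * x j - x i)) *
          ∏ i ∈ univ.erase j, ((x j - x i)⁻¹ * (-x i))
        = (t * x j - x j) *
            ∏ i ∈ univ.erase j, ((t * x j - x i) * ((x j - x i)⁻¹ * (-x i))) := by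
          rw [mul_assoc, ← Finset.prod_mul_distrib]
      _ = (t * x j - x j) *
            ∏ i ∈ univ.erase j, (((t * x j - x i) / (x j - x i)) * (-x i)) := by
          rw [Finset.prod_congr rfl h1]
      _ = _ := by
          rw [Finset.prod_mul_distrib,
            ← Finset.mul_prod_erase univ (fun i => -x i) (mem_univ j)]
          ring
  rw [Finset.sum_congr rfl (fun j _ => key j), ← Finset.sum_mul, ← Finset.mul_sum] at heval
  have hne : (∏ i, (-x i)) ≠ 0 :=
    Finset.prod_ne_zero_iff.mpr fun i _ => neg_ne_zero.mpr (h0 i)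
  exact (mul_right_cancel₀ hne heval).symm

lemma reindexErase {M : Type*} [CommMonoid M] {n : ℕ} (j : Fin (n + 1)) (g : Fin (n + 1) → M) :
    (∏ i : Fin n, g (Equiv.swap 0 j i.succ)) = ∏ i ∈ Finset.univ.erase j, g i := by
  refine Finset.prod_bij (fun i _ => Equiv.swap 0 j i.succ) ?_ ?_ ?_ ?_
  · intro i _
    simp only [Finset.mem_erase, Finset.mem_univ, and_true]
    intro hcontra
    apply Fin.succ_ne_zero i
    have h2 : (Equiv.swap 0 j).symm (Equiv.swap 0 j i.succ) = (Equiv.swap 0 j).symm j := by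
      rw [hcontra]
    simpa using h2
  · intro a _ b _ hab
    exact Fin.succ_injective _ ((Equiv.swap 0 j).injective hab)
  · intro b hb
    rcases Finset.mem_erase.mp hb with ⟨hbj, -⟩
    have h0 : Equiv.swap 0 j b ≠ 0 := by
      intro hc
      apply hbj
      have h2 := congrArg (Equiv.swap 0 j) hc
      rwa [Equiv.swap_apply_self, Equiv.swap_apply_left] at h2
    rcases Fin.exists_succ_eq.mpr h0 with ⟨m, hm⟩
    refine ⟨m, Finset.mem_univ _, ?_⟩
    show Equiv.swap 0 j m.succ = b
    rw [hm, Equiv.swap_apply_self]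
  · intros; rfl

lemma keyB {K : Type} [Field K] (t : K) (ht : t ≠ 1) :
    ∀ (n : ℕ) (x : Fin n → K), Function.Injective x → (∀ i, x i ≠ 0) →
    ∑ w : Equiv.Perm (Fin n), ∏ r, ∏ s ∈ Finset.Ioi r,
        ((t * x (w r) - x (w s)) / (x (w r) - x (w s)))
      = ∏ k ∈ Finset.range n, ((1 - t ^ (k + 1)) / (1 - t)) := by
  intro n
  induction n with
  | zero => intro x _ _; simp
  | succ n IH =>
    intro x hinj h0
    rw [← Equiv.sum_comp (Equiv.Perm.decomposeFin.symm)
      (fun w : Equiv.Perm (Fin (n+1)) => ∏ r, ∏ s ∈ Finset.Ioi r,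
        ((t * x (w r) - x (w s)) / (x (w r) - x (w s)))), Fintype.sum_prod_type]
    have hterm : ∀ (j : Fin (n + 1)) (σ : Equiv.Perm (Fin n)),
        (∏ r, ∏ s ∈ Finset.Ioi r,
          ((t * x ((Equiv.Perm.decomposeFin.symm (j, σ)) r)
              - x ((Equiv.Perm.decomposeFin.symm (j, σ)) s)) /
            (x ((Equiv.Perm.decomposeFin.symm (j, σ)) r)
              - x ((Equiv.Perm.decomposeFin.symm (j, σ)) s))))
        = (∏ i ∈ Finset.univ.erase j, ((t * x j - x i) / (x j - x i))) *
            ∏ r, ∏ s ∈ Finset.Ioi r,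
              ((t * x (Equiv.swap 0 j (σ r).succ) - x (Equiv.swap 0 j (σ s).succ)) /
                (x (Equiv.swap 0 j (σ r).succ) - x (Equiv.swap 0 j (σ s).succ))) := by
      intro j σ
      rw [Fin.prod_univ_succ]
      congr 1
      · rw [Fin.prod_Ioi_zero]
        simp only [Equiv.Perm.decomposeFin_symm_apply_zero,
          Equiv.Perm.decomposeFin_symm_apply_succ]
        rw [← reindexErase j (fun i => (t * x j - x i) / (x j - x i))]
        exact Equiv.prod_comp σ (fun s => (t * x j - x (Equiv.swap 0 j s.succ)) /
          (x j - x (Equiv.swap 0 j s.succ)))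
      · refine Finset.prod_congr rfl fun r _ => ?_
        rw [Fin.prod_Ioi_succ]
        refine Finset.prod_congr rfl fun s _ => ?_
        simp only [Equiv.Perm.decomposeFin_symm_apply_succ]
    simp only [hterm]
    rw [Finset.sum_congr rfl (fun j _ => Finset.mul_sum (Finset.univ)
      (fun σ : Equiv.Perm (Fin n) => ∏ r, ∏ s ∈ Finset.Ioi r,
        ((t * x (Equiv.swap 0 j (σ r).succ) - x (Equiv.swap 0 j (σ s).succ)) /
          (x (Equiv.swap 0 j (σ r).succ) - x (Equiv.swap 0 j (σ s).succ))))
      (∏ i ∈ Finset.univ.erase j, ((t * x j - x i) / (x j - x i))) |>.symm)]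
    have hIH : ∀ j : Fin (n + 1),
        (∑ σ : Equiv.Perm (Fin n), ∏ r, ∏ s ∈ Finset.Ioi r,
          ((t * x (Equiv.swap 0 j (σ r).succ) - x (Equiv.swap 0 j (σ s).succ)) /
            (x (Equiv.swap 0 j (σ r).succ) - x (Equiv.swap 0 j (σ s).succ))))
        = ∏ k ∈ Finset.range n, ((1 - t ^ (k + 1)) / (1 - t)) := by
      intro j
      exact IH (fun i => x (Equiv.swap 0 j i.succ))
        (fun a b hab => Fin.succ_injective _ ((Equiv.swap 0 j).injective (hinj hab)))
        (fun i => h0 _)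
    simp only [hIH]
    rw [← Finset.sum_mul]
    have h1t : (1 : K) - t ≠ 0 := sub_ne_zero_of_ne (Ne.symm ht)
    have hS : (∑ j : Fin (n + 1), ∏ i ∈ Finset.univ.erase j, ((t * x j - x i) / (x j - x i)))
        = (1 - t ^ (n + 1)) / (1 - t) := by
      rw [eq_div_iff h1t, mul_comm]
      exact keyA t x hinj h0
    rw [hS, Finset.prod_range_succ, mul_comm]

end Aux

/-- The symmetrization of the kernel `∏_{r<s} (q⁻² x_r − x_s)/(x_r − x_s)` over all
permutations equals the `q`-factorial `∏_{k=1}^h (1 − q^{−2k})/(1 − q^{−2})`. -/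
theorem stmt0 (h : ℕ) (hh : 1 ≤ h) :
    ∑ w : Equiv.Perm (Fin h),
      ∏ p ∈ Finset.univ.filter (fun p : Fin h × Fin h => p.1 < p.2),
        ((qvar h)⁻¹ ^ 2 * xvar h (w p.1) - xvar h (w p.2)) /
          (xvar h (w p.1) - xvar h (w p.2))
    = ∏ k ∈ Finset.range h,
        (1 - (qvar h)⁻¹ ^ (2 * (k + 1))) / (1 - (qvar h)⁻¹ ^ 2) := by
  classical
  have hinjalg : Function.Injective
      (algebraMap (MvPolynomial (Option (Fin h)) ℚ) (KK h)) :=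
    IsFractionRing.injective _ _
  have hinj : Function.Injective (xvar h) := by
    intro a b hab
    have h2 : (MvPolynomial.X (some a) : MvPolynomial (Option (Fin h)) ℚ)
        = MvPolynomial.X (some b) := hinjalg hab
    exact Option.some_injective _ (MvPolynomial.X_injective h2)
  have h0 : ∀ i, xvar h i ≠ 0 := by
    intro i hc
    have h2 : (MvPolynomial.X (some i) : MvPolynomial (Option (Fin h)) ℚ) = 0 :=
      hinjalg (by simpa [xvar] using hc)
    exact MvPolynomial.X_ne_zero _ h2
  have ht : ((qvar h)⁻¹ ^ 2 : KK h) ≠ 1 := by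
    intro hc
    rw [inv_pow, inv_eq_one] at hc
    have h2 : (MvPolynomial.X none ^ 2 : MvPolynomial (Option (Fin h)) ℚ) = 1 := by
      apply hinjalg
      rw [map_pow, map_one]
      exact hc
    have h3 := congrArg (MvPolynomial.eval (fun _ => (2 : ℚ))) h2
    simp at h3
    norm_num at h3
  have hmain := keyB ((qvar h)⁻¹ ^ 2) ht h (xvar h) hinj h0
  calc
    ∑ w : Equiv.Perm (Fin h),
      ∏ p ∈ Finset.univ.filter (fun p : Fin h × Fin h => p.1 < p.2),
        ((qvar h)⁻¹ ^ 2 * xvar h (w p.1) - xvar h (w p.2)) /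
          (xvar h (w p.1) - xvar h (w p.2))
      = ∑ w : Equiv.Perm (Fin h), ∏ r, ∏ s ∈ Finset.Ioi r,
          (((qvar h)⁻¹ ^ 2) * xvar h (w r) - xvar h (w s)) /
            (xvar h (w r) - xvar h (w s)) := by
        refine Finset.sum_congr rfl fun w _ => ?_
        exact Finset.prod_finset_product' _ Finset.univ (fun r => Finset.Ioi r)
          (f := fun r s => (((qvar h)⁻¹ ^ 2) * xvar h (w r) - xvar h (w s)) /
            (xvar h (w r) - xvar h (w s)))
          (fun p => by simp)
    _ = ∏ k ∈ Finset.range h, ((1 - ((qvar h)⁻¹ ^ 2) ^ (k + 1)) / (1 - (qvar h)⁻¹ ^ 2)) :=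
        hmain
    _ = ∏ k ∈ Finset.range h,
        (1 - (qvar h)⁻¹ ^ (2 * (k + 1))) / (1 - (qvar h)⁻¹ ^ 2) := by
        refine Finset.prod_congr rfl fun k _ => ?_
        rw [pow_mul]
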